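/- arXiv:0912.5303 — 9 statements merged into one kernel-verified Lean document; each statement's English description precedes it below -/
import Mathlib

section
/- Let G be the cumulative distribution function of a real continuous random variable whose density g is symmetric about 0 (g(-x) = g(x)), let f₀ be a probability density function on ℝ^d, and let w : ℝ^d → ℝ be measurable such that if Y has density f₀ then w(Y) has a density symmetric about 0. Then z ↦ 2 f₀(z) G(w(z)) is a probability density function on ℝ^d, i.e. ∫_{ℝ^d} 2 f₀(z) G(w(z)) dz = 1. -/
/-!
Let `μ` be the probability measure with density `f₀`. Then `∫ 2 f₀ G(w) = 2 ∫ G d(w_* μ)`.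
Symmetry of `g` gives `G x + G (-x) = 1`, and symmetry of `w_* μ` gives
`∫ G(-x) d(w_* μ) = ∫ G d(w_* μ)`; together these force `∫ G d(w_* μ) = 1/2`.
-/

open MeasureTheory Set

section SymmetricDensity

variable {g : ℝ → ℝ}

theorem monotone_setIntegral_Iic (hg : Integrable g) (hg_nonneg : ∀ x, 0 ≤ g x) :
    Monotone fun x => ∫ t in Iic x, g t := fun _ _ hxy =>
  setIntegral_mono_set hg.integrableOn (.of_forall hg_nonneg)
    (Iic_subset_Iic.2 hxy).eventuallyLE

theorem setIntegral_Iic_neg_of_symm (hg_symm : ∀ x, g (-x) = g x) (x : ℝ) :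
    ∫ t in Iic (-x), g t = ∫ t in Ioi x, g t := by
  rw [← integral_comp_neg_Ioi]
  simp only [hg_symm]

theorem setIntegral_Iic_add_setIntegral_Iic_neg (hg : Integrable g)
    (hg_symm : ∀ x, g (-x) = g x) (x : ℝ) :
    (∫ t in Iic x, g t) + ∫ t in Iic (-x), g t = ∫ t, g t := by
  rw [setIntegral_Iic_neg_of_symm hg_symm,
    intervalIntegral.integral_Iic_add_Ioi hg.integrableOn hg.integrableOn]

end SymmetricDensity

theorem integral_eq_half_of_add_comp_neg_eq_one {ν : Measure ℝ} [IsProbabilityMeasure ν]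
    [ν.IsNegInvariant] {F : ℝ → ℝ} (hF_meas : Measurable F) (hF_nonneg : ∀ x, 0 ≤ F x)
    (hF : ∀ x, F x + F (-x) = 1) : ∫ x, F x ∂ν = 1 / 2 := by
  have hF_int : Integrable F ν := by
    refine .of_bound hF_meas.aestronglyMeasurable 1 (.of_forall fun x => ?_)
    rw [Real.norm_of_nonneg (hF_nonneg x)]
    linarith [hF x, hF_nonneg (-x)]
  have hsum : ∫ x, F x ∂ν + ∫ x, F (-x) ∂ν = 1 := by
    rw [← integral_add hF_int hF_int.comp_neg]
    simp [hF]
  rw [integral_neg_eq_self] at hsum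
  linarith

theorem isNegInvariant_map_of_map_neg_eq {α : Type*} [MeasurableSpace α] {μ : Measure α}
    {w : α → ℝ} (hw : Measurable w) (hsymm : μ.map (fun z => -w z) = μ.map w) :
    (μ.map w).IsNegInvariant := by
  refine ⟨?_⟩
  rw [Measure.neg, Measure.map_map measurable_neg hw]
  exact hsymm

section WithDensityOfReal

variable {α : Type*} [MeasurableSpace α] {μ : Measure α} {f : α → ℝ}

theorem isProbabilityMeasure_withDensity_ofReal (hf_nonneg : 0 ≤ᵐ[μ] f)
    (hf_int : ∫ x, f x ∂μ = 1) :
    IsProbabilityMeasure (μ.withDensity fun x => ENNReal.ofReal (f x)) := by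
  have hf : Integrable f μ := .of_integral_ne_zero (by simp [hf_int])
  refine ⟨?_⟩
  rw [withDensity_apply _ MeasurableSet.univ, Measure.restrict_univ,
    ← ofReal_integral_eq_lintegral_ofReal hf hf_nonneg, hf_int, ENNReal.ofReal_one]

theorem integral_mul_eq_integral_withDensity_ofReal (hf_meas : AEMeasurable f μ)
    (hf_nonneg : 0 ≤ᵐ[μ] f) (h : α → ℝ) :
    ∫ x, f x * h x ∂μ = ∫ x, h x ∂μ.withDensity fun x => ENNReal.ofReal (f x) := by
  rw [integral_withDensity_eq_integral_toReal_smul₀ hf_meas.ennreal_ofReal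
    (.of_forall fun _ => ENNReal.ofReal_lt_top)]
  refine integral_congr_ae ?_
  filter_upwards [hf_nonneg] with x hx
  rw [ENNReal.toReal_ofReal hx, smul_eq_mul]

end WithDensityOfReal

theorem azzalini_capitanio_lemma_general
    (d : ℕ) (g : ℝ → ℝ) (G : ℝ → ℝ) (f₀ : (Fin d → ℝ) → ℝ) (w : (Fin d → ℝ) → ℝ)
    (hg_nonneg : ∀ x, 0 ≤ g x)
    (hg_int : ∫ x, g x = 1) (hg_symm : ∀ x, g (-x) = g x)
    (hG : ∀ x, G x = ∫ t in Iic x, g t)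
    (hf₀_meas : Measurable f₀) (hf₀_nonneg : ∀ z, 0 ≤ f₀ z)
    (hf₀_int : ∫ z, f₀ z = 1)
    (hw : Measurable w)
    (hsymm :
      Measure.map (fun z => -w z)
        (volume.withDensity (fun z => ENNReal.ofReal (f₀ z))) =
      Measure.map w (volume.withDensity (fun z => ENNReal.ofReal (f₀ z)))) :
    ∫ z, 2 * f₀ z * G (w z) = 1 := by
  obtain rfl : G = fun x => ∫ t in Iic x, g t := funext hG
  have hg : Integrable g := .of_integral_ne_zero (by simp [hg_int])
  set μ := volume.withDensity fun z => ENNReal.ofReal (f₀ z)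
  have : IsProbabilityMeasure μ :=
    isProbabilityMeasure_withDensity_ofReal (.of_forall hf₀_nonneg) hf₀_int
  have : IsProbabilityMeasure (μ.map w) := Measure.isProbabilityMeasure_map hw.aemeasurable
  have : (μ.map w).IsNegInvariant := isNegInvariant_map_of_map_neg_eq hw hsymm
  have hG_meas : Measurable fun x => ∫ t in Iic x, g t :=
    (monotone_setIntegral_Iic hg hg_nonneg).measurable
  have hhalf : ∫ x, (∫ t in Iic x, g t) ∂μ.map w = 1 / 2 :=
    integral_eq_half_of_add_comp_neg_eq_one hG_meas
      (fun _ => setIntegral_nonneg measurableSet_Iic fun t _ => hg_nonneg t)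
      (fun x => by rw [setIntegral_Iic_add_setIntegral_Iic_neg hg hg_symm, hg_int])
  calc ∫ z, 2 * f₀ z * ∫ t in Iic (w z), g t
      = 2 * ∫ z, f₀ z * ∫ t in Iic (w z), g t := by
        simp only [mul_assoc]
        exact integral_const_mul 2 _
    _ = 2 * ∫ x, (∫ t in Iic x, g t) ∂μ.map w := by
        rw [integral_mul_eq_integral_withDensity_ofReal hf₀_meas.aemeasurable
          (.of_forall hf₀_nonneg), integral_map hw.aemeasurable hG_meas.aestronglyMeasurable]
    _ = 1 := by rw [hhalf]; norm_num

/-- Proposition 1 (Azzalini–Capitanio lemma): if `G` is the CDF of a continuous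
distribution with density `g` symmetric about 0, `f₀` is a probability density on
`ℝ^d`, and the law of `w(Y)` (for `Y` with density `f₀`) is symmetric about 0, then
`z ↦ 2 f₀(z) G(w(z))` integrates to 1. -/
theorem azzalini_capitanio_lemma
    (d : ℕ) (g : ℝ → ℝ) (G : ℝ → ℝ) (f₀ : (Fin d → ℝ) → ℝ) (w : (Fin d → ℝ) → ℝ)
    (hg_meas : Measurable g) (hg_nonneg : ∀ x, 0 ≤ g x)
    (hg_int : ∫ x, g x = 1) (hg_symm : ∀ x, g (-x) = g x)
    (hG : ∀ x, G x = ∫ t in Iic x, g t)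
    (hf₀_meas : Measurable f₀) (hf₀_nonneg : ∀ z, 0 ≤ f₀ z)
    (hf₀_int : ∫ z, f₀ z = 1)
    (hw : Measurable w)
    (hsymm :
      Measure.map (fun z => -w z)
        (volume.withDensity (fun z => ENNReal.ofReal (f₀ z))) =
      Measure.map w (volume.withDensity (fun z => ENNReal.ofReal (f₀ z)))) :
    ∫ z, 2 * f₀ z * G (w z) = 1 :=
  azzalini_capitanio_lemma_general d g G f₀ w hg_nonneg hg_int hg_symm hG hf₀_meas hf₀_nonneg
    hf₀_int hw hsymm
end

section
/- Let f₀ be a probability density on ℝ^d with f₀(-z) = f₀(z) for all z, let G : ℝ → [0,1] be a cumulative distribution function with G(-x) = 1 - G(x) for all x, and let w : ℝ^d → ℝ satisfy w(-z) = -w(z) for all z. Then ∫_{ℝ^d} 2 f₀(z) G(w(z)) dz = 1. -/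
open MeasureTheory Set

/-- Proposition 2 (Azzalini–Capitanio 2003): if `f₀` is a centrally symmetric
probability density on `ℝ^d`, `G` is a CDF with `G(-x) = 1 - G(x)`, and `w` is odd,
then `z ↦ 2 f₀(z) G(w(z))` integrates to 1. -/
theorem skew_symmetric_density
    (d : ℕ) (f₀ : (Fin d → ℝ) → ℝ) (G : ℝ → ℝ) (w : (Fin d → ℝ) → ℝ)
    (hf₀_meas : Measurable f₀) (hf₀_nonneg : ∀ z, 0 ≤ f₀ z)
    (hf₀_int : ∫ z, f₀ z = 1) (hf₀_symm : ∀ z, f₀ (-z) = f₀ z)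
    (hG_mono : Monotone G) (hG_range : ∀ x, G x ∈ Icc (0:ℝ) 1)
    (hG_symm : ∀ x, G (-x) = 1 - G x)
    (hw_meas : Measurable w) (hw_odd : ∀ z, w (-z) = -w z) :
    ∫ z, 2 * f₀ z * G (w z) = 1 := by
  have hf₀_integrable : Integrable f₀ := by
    by_contra h
    rw [integral_undef h] at hf₀_int
    norm_num at hf₀_int
  have hGw_meas : Measurable fun z => G (w z) := hG_mono.measurable.comp hw_meas
  have hg_int : Integrable (fun z => f₀ z * G (w z)) := by
    refine hf₀_integrable.mono' ((hf₀_meas.mul hGw_meas).aestronglyMeasurable) ?_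
    filter_upwards with z
    rw [Real.norm_eq_abs, abs_mul, abs_of_nonneg (hf₀_nonneg z),
      abs_of_nonneg (hG_range (w z)).1]
    calc f₀ z * G (w z) ≤ f₀ z * 1 :=
          mul_le_mul_of_nonneg_left (hG_range (w z)).2 (hf₀_nonneg z)
      _ = f₀ z := mul_one _
  have key : ∫ z, f₀ z * G (w z) = ∫ z, f₀ z * (1 - G (w z)) := by
    calc ∫ z, f₀ z * G (w z) = ∫ z, f₀ (-z) * G (w (-z)) := by
          exact (MeasureTheory.integral_neg_eq_self (fun z => f₀ z * G (w z)) volume).symm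
      _ = ∫ z, f₀ z * (1 - G (w z)) := by
          congr 1; funext z; rw [hf₀_symm, hw_odd, hG_symm]
  have hsub : Integrable (fun z => f₀ z * (1 - G (w z))) := by
    have : (fun z => f₀ z * (1 - G (w z))) = fun z => f₀ z - f₀ z * G (w z) := by
      funext z; ring
    rw [this]; exact hf₀_integrable.sub hg_int
  have h2 : (∫ z, f₀ z * G (w z)) + (∫ z, f₀ z * (1 - G (w z))) = 1 := by
    rw [← integral_add hg_int hsub]
    simp_rw [show ∀ z, f₀ z * G (w z) + f₀ z * (1 - G (w z)) = f₀ z by intro z; ring]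
    exact hf₀_int
  rw [← key] at h2
  calc ∫ z, 2 * f₀ z * G (w z) = 2 * ∫ z, f₀ z * G (w z) := by
        simp_rw [mul_assoc]; exact integral_const_mul 2 _
    _ = 1 := by linarith
end

section
/- Let f₀ be a centrally symmetric probability density on ℝ^d and let π : ℝ^d → [0,1] be measurable with π(y) + π(-y) = 1 for all y. Then y ↦ 2 f₀(y) π(y) is a probability density on ℝ^d. -/
open MeasureTheory Set

/-- Wang–Boyer–Genton formulation: if `f₀` is a centrally symmetric probability
density on `ℝ^d` and `π₀ : ℝ^d → [0,1]` satisfies `π₀(y) + π₀(-y) = 1`, then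
`y ↦ 2 f₀(y) π₀(y)` is a probability density. -/
theorem skew_symmetric_density_pi
    (d : ℕ) (f₀ : (Fin d → ℝ) → ℝ) (π₀ : (Fin d → ℝ) → ℝ)
    (hf₀_meas : Measurable f₀) (hf₀_nonneg : ∀ z, 0 ≤ f₀ z)
    (hf₀_int : ∫ z, f₀ z = 1) (hf₀_symm : ∀ z, f₀ (-z) = f₀ z)
    (hπ_meas : Measurable π₀) (hπ_range : ∀ y, π₀ y ∈ Icc (0:ℝ) 1)
    (hπ : ∀ y, π₀ y + π₀ (-y) = 1) :
    ∫ y, 2 * f₀ y * π₀ y = 1 := by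
  have hInt : Integrable f₀ := by
    by_contra h
    rw [integral_undef h] at hf₀_int; norm_num at hf₀_int
  have hg_meas : Measurable fun y => 2 * f₀ y * π₀ y := by
    exact ((measurable_const.mul hf₀_meas).mul hπ_meas)
  have hgInt : Integrable fun y => 2 * f₀ y * π₀ y := by
    refine (hInt.const_mul 2).mono hg_meas.aestronglyMeasurable ?_
    filter_upwards with y
    have h1 := (hπ_range y).1
    have h2 := (hπ_range y).2
    have hf := hf₀_nonneg y
    rw [Real.norm_eq_abs, Real.norm_eq_abs, abs_of_nonneg (by positivity),
      abs_of_nonneg (by positivity)]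
    nlinarith
  have hneg : (∫ y, 2 * f₀ (-y) * π₀ (-y)) = ∫ y, 2 * f₀ y * π₀ y := by
    exact integral_neg_eq_self (fun y => 2 * f₀ y * π₀ y) volume
  have hsub : (∫ y, 2 * f₀ y * (1 - π₀ y)) = ∫ y, 2 * f₀ y * π₀ y := by
    rw [← hneg]
    congr 1; funext y
    rw [hf₀_symm y]
    have h : π₀ (-y) = 1 - π₀ y := by linarith [hπ y]
    rw [h]
  have hsub2 : (∫ y, 2 * f₀ y * (1 - π₀ y)) =
      (∫ y, 2 * f₀ y) - ∫ y, 2 * f₀ y * π₀ y := by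
    rw [← integral_sub (hInt.const_mul 2) hgInt]
    congr 1; funext y; ring
  have h2 : (∫ y, 2 * f₀ y) = 2 := by
    rw [integral_const_mul, hf₀_int]; norm_num
  rw [hsub2, h2] at hsub
  linarith
end

section
/- Let f₀ be a centrally symmetric probability density on ℝ^d, G a CDF with G(-x) = 1 - G(x), and w odd. Let X ~ G and Y ~ f₀ be independent. Define Z = Y if X ≤ w(Y) and Z = -Y otherwise. Then Z has density z ↦ 2 f₀(z) G(w(z)). -/
/-!
Given `Y = y`, the variable `Z` equals `y` with probability `G (w y)` and `-y` with probability
`1 - G (w y)`. Hence the law of `Z` is `f₀(y) G(w y) dy` plus the reflection of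
`f₀(y) (1 - G(w y)) dy`, and by the symmetry of `f₀` and `G` and the oddness of `w` the reflected
density at `z` is `f₀(z) (1 - G(-w z)) = f₀(z) G(w z)`.
-/

open MeasureTheory ProbabilityTheory Set
open scoped ENNReal

lemma measure_setOf_ite_le_mem {E : Type*} (μ : Measure ℝ) (t : ℝ) (a b : E) (s : Set E) :
    μ {x | (if x ≤ t then a else b) ∈ s} =
      s.indicator (fun _ => μ (Iic t)) a + s.indicator (fun _ => μ (Ioi t)) b := by
  by_cases ha : a ∈ s <;> by_cases hb : b ∈ s
  · simpa [ha, hb, apply_ite (· ∈ s)] using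
      (measure_add_measure_compl (μ := μ) (measurableSet_Iic (a := t))).symm
  all_goals simp [ha, hb, apply_ite (· ∈ s), ← Iic_def, ← Ioi_def]

section

variable {E : Type*} [MeasurableSpace E]

lemma measurable_measure_Iic_comp (μ : Measure ℝ) {w : E → ℝ} (hw : Measurable w) :
    Measurable fun y => μ (Iic (w y)) :=
  (Monotone.measurable fun _ _ h => measure_mono (Iic_subset_Iic.2 h)).comp hw

lemma measurable_measure_Ioi_comp (μ : Measure ℝ) {w : E → ℝ} (hw : Measurable w) :
    Measurable fun y => μ (Ioi (w y)) :=
  (Antitone.measurable fun _ _ h => measure_mono (Ioi_subset_Ioi h)).comp hw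

lemma measurable_ite_le {w : E → ℝ} {φ : E → E} (hw : Measurable w) (hφ : Measurable φ) :
    Measurable fun p : ℝ × E => if p.1 ≤ w p.2 then p.2 else φ p.2 :=
  Measurable.ite (measurableSet_le measurable_fst (hw.comp measurable_snd)) measurable_snd
    (hφ.comp measurable_snd)

theorem map_prod_ite_le (μ : Measure ℝ) (ν : Measure E) [SFinite μ] [SFinite ν] {w : E → ℝ}
    {φ : E → E} (hw : Measurable w) (hφ : Measurable φ) :
    (μ.prod ν).map (fun p => if p.1 ≤ w p.2 then p.2 else φ p.2) =
      ν.withDensity (fun y => μ (Iic (w y))) + (ν.withDensity fun y => μ (Ioi (w y))).map φ := by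
  ext s hs
  rw [Measure.map_apply (measurable_ite_le hw hφ) hs,
    Measure.prod_apply_symm (measurable_ite_le hw hφ hs), Measure.add_apply,
    Measure.map_apply hφ hs, withDensity_apply _ hs, withDensity_apply _ (hφ hs),
    ← lintegral_indicator hs, ← lintegral_indicator (hφ hs),
    ← lintegral_add_left ((measurable_measure_Iic_comp μ hw).indicator hs)]
  exact lintegral_congr fun y => measure_setOf_ite_le_mem μ (w y) y (φ y) s

theorem map_ite_le_of_indepFun {Ω : Type*} [MeasurableSpace Ω] {P : Measure Ω}
    [IsFiniteMeasure P] {X : Ω → ℝ} {Y : Ω → E} {w : E → ℝ} {φ : E → E}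
    (hX : Measurable X) (hY : Measurable Y) (hw : Measurable w) (hφ : Measurable φ)
    (hindep : IndepFun X Y P) :
    P.map (fun ω => if X ω ≤ w (Y ω) then Y ω else φ (Y ω)) =
      (P.map Y).withDensity (fun y => P.map X (Iic (w y))) +
        ((P.map Y).withDensity fun y => P.map X (Ioi (w y))).map φ := by
  rw [← map_prod_ite_le _ _ hw hφ,
    ← hindep.map_prod_eq_prod_map_map hX.aemeasurable hY.aemeasurable,
    Measure.map_map (measurable_ite_le hw hφ) (hX.prodMk hY)]
  rfl

end

lemma map_neg_withDensity {G : Type*} [MeasurableSpace G] [InvolutiveNeg G] [MeasurableNeg G]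
    (μ : Measure G) [μ.IsNegInvariant] (f : G → ℝ≥0∞) :
    (μ.withDensity f).map Neg.neg = μ.withDensity fun x => f (-x) := by
  ext s hs
  rw [Measure.map_apply measurable_neg hs, withDensity_apply _ (measurable_neg hs),
    withDensity_apply _ hs]
  simpa using (Measure.measurePreserving_neg μ).setLIntegral_comp_preimage_emb
    (MeasurableEquiv.neg G).measurableEmbedding (fun x => f (-x)) s

lemma measure_Ioi_neg_eq_of_symm {μ : Measure ℝ} [IsProbabilityMeasure μ] {G : ℝ → ℝ}
    (hG : ∀ x, μ (Iic x) = ENNReal.ofReal (G x)) (hG_symm : ∀ x, G (-x) = 1 - G x) (t : ℝ) :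
    μ (Ioi (-t)) = ENNReal.ofReal (G t) := by
  have hG_le : G t ≤ 1 := ENNReal.ofReal_le_one.1 (hG t ▸ prob_le_one)
  rw [← compl_Iic, prob_compl_eq_one_sub measurableSet_Iic, hG, hG_symm, ← ENNReal.ofReal_one,
    ← ENNReal.ofReal_sub _ (sub_nonneg.2 hG_le), sub_sub_cancel]

theorem stochastic_representation_general
    {Ω : Type*} [MeasurableSpace Ω] (P : Measure Ω) [IsProbabilityMeasure P]
    (d : ℕ) (f₀ : (Fin d → ℝ) → ℝ) (G : ℝ → ℝ) (w : (Fin d → ℝ) → ℝ)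
    (X : Ω → ℝ) (Y : Ω → (Fin d → ℝ))
    (hf₀_meas : Measurable f₀) (hf₀_nonneg : ∀ z, 0 ≤ f₀ z)
    (hf₀_symm : ∀ z, f₀ (-z) = f₀ z)
    (hG_symm : ∀ x, G (-x) = 1 - G x)
    (hw_meas : Measurable w) (hw_odd : ∀ z, w (-z) = -w z)
    (hX : Measurable X) (hY : Measurable Y)
    (hindep : IndepFun X Y P)
    (hXlaw : ∀ x : ℝ, (Measure.map X P) (Iic x) = ENNReal.ofReal (G x))
    (hYlaw : Measure.map Y P = volume.withDensity (fun z => ENNReal.ofReal (f₀ z))) :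
    Measure.map (fun ω => if X ω ≤ w (Y ω) then Y ω else -Y ω) P =
      volume.withDensity (fun z => ENNReal.ofReal (2 * f₀ z * G (w z))) := by
  have : IsProbabilityMeasure (P.map X) := Measure.isProbabilityMeasure_map hX.aemeasurable
  have hf := hf₀_meas.ennreal_ofReal
  rw [map_ite_le_of_indepFun hX hY hw_meas measurable_neg hindep, hYlaw,
    ← withDensity_mul _ hf (measurable_measure_Iic_comp _ hw_meas),
    ← withDensity_mul _ hf (measurable_measure_Ioi_comp _ hw_meas), map_neg_withDensity,
    ← withDensity_add_left (hf.mul (measurable_measure_Iic_comp _ hw_meas))]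
  congr 1
  funext z
  simp only [Pi.add_apply, Pi.mul_apply, hf₀_symm, hw_odd, hXlaw,
    measure_Ioi_neg_eq_of_symm hXlaw hG_symm]
  rw [mul_assoc, ENNReal.ofReal_mul zero_le_two, ENNReal.ofReal_mul (hf₀_nonneg z),
    ENNReal.ofReal_ofNat, two_mul]

/-- Stochastic representation (equation 5): with `f₀` centrally symmetric,
`G` a CDF with `G(-x) = 1 - G(x)`, `w` odd, `X ~ G` and `Y ~ f₀` independent,
the variable `Z = Y` if `X ≤ w(Y)`, `Z = -Y` otherwise, has density
`z ↦ 2 f₀(z) G(w(z))`. -/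
theorem stochastic_representation
    {Ω : Type*} [MeasurableSpace Ω] (P : Measure Ω) [IsProbabilityMeasure P]
    (d : ℕ) (f₀ : (Fin d → ℝ) → ℝ) (G : ℝ → ℝ) (w : (Fin d → ℝ) → ℝ)
    (X : Ω → ℝ) (Y : Ω → (Fin d → ℝ))
    (hf₀_meas : Measurable f₀) (hf₀_nonneg : ∀ z, 0 ≤ f₀ z)
    (hf₀_symm : ∀ z, f₀ (-z) = f₀ z)
    (hG_mono : Monotone G) (hG_symm : ∀ x, G (-x) = 1 - G x)
    (hG_cont : Continuous G)
    (hw_meas : Measurable w) (hw_odd : ∀ z, w (-z) = -w z)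
    (hX : Measurable X) (hY : Measurable Y)
    (hindep : IndepFun X Y P)
    (hXlaw : ∀ x : ℝ, (Measure.map X P) (Iic x) = ENNReal.ofReal (G x))
    (hYlaw : Measure.map Y P = volume.withDensity (fun z => ENNReal.ofReal (f₀ z))) :
    Measure.map (fun ω => if X ω ≤ w (Y ω) then Y ω else -Y ω) P =
      volume.withDensity (fun z => ENNReal.ofReal (2 * f₀ z * G (w z))) :=
  stochastic_representation_general P d f₀ G w X Y hf₀_meas hf₀_nonneg hf₀_symm hG_symm hw_meas
    hw_odd hX hY hindep hXlaw hYlaw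
end

section
/- Let f₀ be a probability density on ℝ^d, G a CDF with G(-x) = 1 - G(x) for all x, w : ℝ^d → ℝ, and R : ℝ^d → ℝ^d an invertible differentiable map satisfying f₀(y) = f₀(R(y)), |det R'(y)| = 1, and w(R(y)) = -w(y) for all y. Let X ~ G and Y ~ f₀ be independent with X continuous. Then Z defined by Z = Y if X ≤ w(Y) and Z = R⁻¹(Y) otherwise has density z ↦ 2 f₀(z) G(w(z)). -/
open MeasureTheory ProbabilityTheory Set

/-- Generalized stochastic representation (equation 8): if `R` is an invertible
differentiable map with `f₀ ∘ R = f₀`, `|det R'| = 1` and `w ∘ R = -w`, `X ~ G`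
(continuous, `G(-x) = 1 - G(x)`) and `Y ~ f₀` independent, then `Z = Y` if
`X ≤ w(Y)`, `Z = R⁻¹(Y)` otherwise, has density `z ↦ 2 f₀(z) G(w(z))`. -/
theorem generalized_stochastic_representation
    {Ω : Type*} [MeasurableSpace Ω] (P : Measure Ω) [IsProbabilityMeasure P]
    (d : ℕ) (f₀ : (Fin d → ℝ) → ℝ) (G : ℝ → ℝ) (w : (Fin d → ℝ) → ℝ)
    (R Rinv : (Fin d → ℝ) → (Fin d → ℝ))
    (R' : (Fin d → ℝ) → ((Fin d → ℝ) →L[ℝ] (Fin d → ℝ)))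
    (X : Ω → ℝ) (Y : Ω → (Fin d → ℝ))
    (hf₀_meas : Measurable f₀) (hf₀_nonneg : ∀ z, 0 ≤ f₀ z)
    (hG_mono : Monotone G) (hG_symm : ∀ x, G (-x) = 1 - G x)
    (hG_cont : Continuous G)
    (hw_meas : Measurable w)
    (hR_deriv : ∀ y, HasFDerivAt R (R' y) y)
    (hRinv_meas : Measurable Rinv)
    (hR_left : Function.LeftInverse Rinv R) (hR_right : Function.RightInverse Rinv R)
    (hR_f₀ : ∀ y, f₀ (R y) = f₀ y)
    (hR_det : ∀ y, |(R' y).det| = 1)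
    (hR_w : ∀ y, w (R y) = -w y)
    (hX : Measurable X) (hY : Measurable Y)
    (hindep : IndepFun X Y P)
    (hXlaw : ∀ x : ℝ, (Measure.map X P) (Iic x) = ENNReal.ofReal (G x))
    (hYlaw : Measure.map Y P = volume.withDensity (fun z => ENNReal.ofReal (f₀ z))) :
    Measure.map (fun ω => if X ω ≤ w (Y ω) then Y ω else Rinv (Y ω)) P =
      volume.withDensity (fun z => ENNReal.ofReal (2 * f₀ z * G (w z))) := by
  have hG_meas : Measurable G := hG_cont.measurable
  set μX := Measure.map X P with hμX
  set μY := Measure.map Y P with hμY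
  haveI hPX : IsProbabilityMeasure μX := Measure.isProbabilityMeasure_map hX.aemeasurable
  haveI hPY : IsProbabilityMeasure μY := Measure.isProbabilityMeasure_map hY.aemeasurable
  -- G takes values in [0,1]
  have hG_le : ∀ x, G x ≤ 1 := by
    intro x
    have h1 : μX (Iic x) ≤ 1 := prob_le_one
    rw [hXlaw x] at h1
    exact ENNReal.ofReal_le_one.mp h1
  have hG_nonneg : ∀ x, 0 ≤ G x := by
    intro x
    have := hG_symm (-x)
    rw [neg_neg] at this
    linarith [hG_le (-x)]
  have hμX_Iic : ∀ t, μX (Iic t) = ENNReal.ofReal (G t) := hXlaw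
  have hμX_Ioi : ∀ t, μX (Ioi t) = ENNReal.ofReal (1 - G t) := by
    intro t
    have hc : μX (Ioi t) = μX univ - μX (Iic t) := by
      rw [← compl_Iic]
      exact measure_compl measurableSet_Iic (measure_ne_top _ _)
    rw [hc, measure_univ, hμX_Iic, ENNReal.ofReal_sub _ (hG_nonneg t), ENNReal.ofReal_one]
  -- joint law
  have hjoint : Measure.map (fun ω => (Y ω, X ω)) P = μY.prod μX :=
    (indepFun_iff_map_prod_eq_prod_map_map hY.aemeasurable hX.aemeasurable).mp hindep.symm
  set g : (Fin d → ℝ) × ℝ → (Fin d → ℝ) := fun p => if p.2 ≤ w p.1 then p.1 else Rinv p.1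
    with hg_def
  have hg_meas : Measurable g := by
    apply Measurable.ite _ measurable_fst (hRinv_meas.comp measurable_fst)
    exact measurableSet_le measurable_snd (hw_meas.comp measurable_fst)
  have hmap : Measure.map (fun ω => if X ω ≤ w (Y ω) then Y ω else Rinv (Y ω)) P
      = Measure.map g (μY.prod μX) := by
    rw [← hjoint, Measure.map_map hg_meas (hY.prodMk hX)]
    rfl
  have hR_inj : Function.Injective R := hR_left.injective
  have hRinv_preim : ∀ A : Set (Fin d → ℝ), Rinv ⁻¹' A = R '' A := by
    intro A
    ext y
    constructor
    · intro hy
      exact ⟨Rinv y, hy, hR_right y⟩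
    · rintro ⟨z, hz, rfl⟩
      show Rinv (R z) ∈ A
      rwa [hR_left z]
  refine hmap.trans (Measure.ext fun A hA => ?_)
  rw [Measure.map_apply hg_meas hA, Measure.prod_apply (hg_meas hA)]
  -- compute the sections
  have hsection : ∀ y : Fin d → ℝ,
      μX (Prod.mk y ⁻¹' (g ⁻¹' A)) =
        A.indicator (fun z => ENNReal.ofReal (G (w z))) y
          + (Rinv ⁻¹' A).indicator (fun z => ENNReal.ofReal (1 - G (w z))) y := by
    intro y
    have hset : Prod.mk y ⁻¹' (g ⁻¹' A)
        = {x : ℝ | (if x ≤ w y then y else Rinv y) ∈ A} := rfl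
    rw [hset]
    by_cases hy : y ∈ A <;> by_cases hy' : Rinv y ∈ A
    · have : {x : ℝ | (if x ≤ w y then y else Rinv y) ∈ A} = univ := by
        ext x; by_cases h : x ≤ w y <;> simp [h, hy, hy']
      rw [this, measure_univ, indicator_of_mem hy,
        indicator_of_mem (mem_preimage.mpr hy'),
        ← ENNReal.ofReal_add (hG_nonneg _) (by linarith [hG_le (w y)])]
      norm_num
    · have : {x : ℝ | (if x ≤ w y then y else Rinv y) ∈ A} = Iic (w y) := by
        ext x; by_cases h : x ≤ w y <;> simp [h, hy, hy']
      rw [this, hμX_Iic, indicator_of_mem hy,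
        indicator_of_notMem (fun h => hy' (mem_preimage.mp h)), add_zero]
    · have : {x : ℝ | (if x ≤ w y then y else Rinv y) ∈ A} = Ioi (w y) := by
        ext x
        by_cases h : x ≤ w y
        · simp [h, hy, not_lt.mpr h]
        · simp [h, hy', not_le.mp h]
      rw [this, hμX_Ioi, indicator_of_notMem hy,
        indicator_of_mem (mem_preimage.mpr hy'), zero_add]
    · have : {x : ℝ | (if x ≤ w y then y else Rinv y) ∈ A} = ∅ := by
        ext x; by_cases h : x ≤ w y <;> simp [h, hy, hy']
      rw [this, measure_empty, indicator_of_notMem hy,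
        indicator_of_notMem (fun h => hy' (mem_preimage.mp h)), add_zero]
  rw [lintegral_congr hsection]
  have hmeas1 : Measurable fun z => ENNReal.ofReal (G (w z)) :=
    (hG_meas.comp hw_meas).ennreal_ofReal
  have hmeas2 : Measurable fun z => ENNReal.ofReal (1 - G (w z)) :=
    ((measurable_const.sub (hG_meas.comp hw_meas))).ennreal_ofReal
  have hA' : MeasurableSet (Rinv ⁻¹' A) := hRinv_meas hA
  rw [lintegral_add_left ((hmeas1.indicator hA)) _]
  rw [lintegral_indicator hA, lintegral_indicator hA']
  -- rewrite μY as withDensity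
  have hwd : ∀ (B : Set (Fin d → ℝ)) (hB : MeasurableSet B) (h : ℝ → ℝ)
      (hh : Measurable h),
      ∫⁻ y in B, ENNReal.ofReal (h (w y)) ∂μY
        = ∫⁻ y in B, ENNReal.ofReal (f₀ y * h (w y)) := by
    intro B hB h hh
    have hm' : Measurable fun y => ENNReal.ofReal (h (w y)) :=
      (hh.comp hw_meas).ennreal_ofReal
    rw [hYlaw, restrict_withDensity hB,
      lintegral_withDensity_eq_lintegral_mul _ hf₀_meas.ennreal_ofReal hm']
    refine lintegral_congr fun y => ?_
    simp [ENNReal.ofReal_mul (hf₀_nonneg y)]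
  rw [hwd A hA G hG_meas]
  have h2 := hwd (Rinv ⁻¹' A) hA' (fun t => 1 - G t) (measurable_const.sub hG_meas)
  rw [h2]
  -- change of variables on the second integral
  have hcv : ∫⁻ y in Rinv ⁻¹' A, ENNReal.ofReal (f₀ y * (1 - G (w y)))
      = ∫⁻ z in A, ENNReal.ofReal (f₀ z * G (w z)) := by
    rw [hRinv_preim A,
      lintegral_image_eq_lintegral_abs_det_fderiv_mul volume hA
        (fun x _ => (hR_deriv x).hasFDerivWithinAt) (hR_inj.injOn)
        (fun y => ENNReal.ofReal (f₀ y * (1 - G (w y))))]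
    refine lintegral_congr fun z => ?_
    rw [hR_det z, hR_f₀ z, hR_w z, hG_symm (w z)]
    ring_nf
    simp
  have hm : Measurable fun z => ENNReal.ofReal (f₀ z * G (w z)) :=
    (hf₀_meas.mul (hG_meas.comp hw_meas)).ennreal_ofReal
  rw [hcv, withDensity_apply _ hA, ← lintegral_add_left hm]
  refine lintegral_congr fun z => ?_
  rw [← ENNReal.ofReal_add (mul_nonneg (hf₀_nonneg z) (hG_nonneg _))
    (mul_nonneg (hf₀_nonneg z) (hG_nonneg _))]
  congr 1
  ring
end

section
/- Let f₀ be a probability density on ℝ² that is centrally symmetric (f₀(-z) = f₀(z)) and a symmetric function of its two arguments (f₀(z₁, z₂) = f₀(z₂, z₁)), let w₂ : ℝ² → ℝ satisfy w₂(z₂, z₁) = -w₂(z₁, z₂), and let G be a CDF on ℝ with G(-x) = 1 - G(x), continuous except possibly at 0. Then (z₁, z₂) ↦ 2 f₀(z₁, z₂) G(w₂(z₁, z₂)) is a probability density on ℝ². -/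
open MeasureTheory Set

/-- Proposition 5: if `f₀` is a centrally symmetric, exchangeable probability
density on `ℝ²`, `w₂` is antisymmetric under swapping coordinates, and `G` is a
CDF with `G(-x) = 1 - G(x)` continuous except possibly at 0, then
`(z₁,z₂) ↦ 2 f₀(z₁,z₂) G(w₂(z₁,z₂))` is a probability density on `ℝ²`. -/
theorem prop5_density
    (f₀ : ℝ → ℝ → ℝ) (w₂ : ℝ → ℝ → ℝ) (G : ℝ → ℝ)
    (hf₀_meas : Measurable (fun p : ℝ × ℝ => f₀ p.1 p.2))
    (hf₀_nonneg : ∀ z₁ z₂, 0 ≤ f₀ z₁ z₂)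
    (hf₀_int : ∫ z : ℝ × ℝ, f₀ z.1 z.2 = 1)
    (hf₀_central : ∀ z₁ z₂, f₀ (-z₁) (-z₂) = f₀ z₁ z₂)
    (hf₀_exch : ∀ z₁ z₂, f₀ z₁ z₂ = f₀ z₂ z₁)
    (hw₂_meas : Measurable (fun p : ℝ × ℝ => w₂ p.1 p.2))
    (hw₂_anti : ∀ z₁ z₂, w₂ z₂ z₁ = -w₂ z₁ z₂)
    (hG_mono : Monotone G) (hG_range : ∀ x, G x ∈ Icc (0:ℝ) 1)
    (hG_symm : ∀ x, G (-x) = 1 - G x)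
    (hG_cont : ∀ x ≠ (0:ℝ), ContinuousAt G x) :
    ∫ z : ℝ × ℝ, 2 * f₀ z.1 z.2 * G (w₂ z.1 z.2) = 1 := by
  have hG_meas : Measurable G := hG_mono.measurable
  have hf_int : Integrable (fun z : ℝ × ℝ => f₀ z.1 z.2) := by
    by_contra h
    rw [integral_undef h] at hf₀_int
    norm_num at hf₀_int
  have hmeas : Measurable (fun z : ℝ × ℝ => f₀ z.1 z.2 * G (w₂ z.1 z.2)) :=
    hf₀_meas.mul (hG_meas.comp hw₂_meas)
  have hint : Integrable (fun z : ℝ × ℝ => f₀ z.1 z.2 * G (w₂ z.1 z.2)) := by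
    apply Integrable.mono' hf_int hmeas.aestronglyMeasurable
    filter_upwards with z
    rw [Real.norm_eq_abs, abs_mul, abs_of_nonneg (hf₀_nonneg _ _),
      abs_of_nonneg (hG_range _).1]
    calc f₀ z.1 z.2 * G (w₂ z.1 z.2) ≤ f₀ z.1 z.2 * 1 :=
          mul_le_mul_of_nonneg_left (hG_range _).2 (hf₀_nonneg _ _)
      _ = f₀ z.1 z.2 := mul_one _
  have hswap : ∫ z : ℝ × ℝ, f₀ z.1 z.2 * G (w₂ z.1 z.2)
      = ∫ z : ℝ × ℝ, f₀ z.2 z.1 * G (w₂ z.2 z.1) := by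
    rw [show (volume : Measure (ℝ × ℝ)) = (volume : Measure ℝ).prod volume from
      Measure.volume_eq_prod ℝ ℝ]
    exact (MeasureTheory.integral_prod_swap
      (fun z : ℝ × ℝ => f₀ z.1 z.2 * G (w₂ z.1 z.2))).symm
  have hkey : ∫ z : ℝ × ℝ, f₀ z.1 z.2 * G (w₂ z.1 z.2)
      = ∫ z : ℝ × ℝ, f₀ z.1 z.2 * (1 - G (w₂ z.1 z.2)) := by
    rw [hswap]
    congr 1
    funext z
    rw [← hf₀_exch, hw₂_anti, hG_symm]
  have hsub : ∫ z : ℝ × ℝ, f₀ z.1 z.2 * (1 - G (w₂ z.1 z.2))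
      = (∫ z : ℝ × ℝ, f₀ z.1 z.2) - ∫ z : ℝ × ℝ, f₀ z.1 z.2 * G (w₂ z.1 z.2) := by
    rw [← integral_sub hf_int hint]
    congr 1
    funext z
    ring
  have hI : ∫ z : ℝ × ℝ, f₀ z.1 z.2 * G (w₂ z.1 z.2) = 1 / 2 := by
    rw [hsub, hf₀_int] at hkey
    linarith
  have : ∫ z : ℝ × ℝ, 2 * f₀ z.1 z.2 * G (w₂ z.1 z.2)
      = 2 * ∫ z : ℝ × ℝ, f₀ z.1 z.2 * G (w₂ z.1 z.2) := by
    rw [← MeasureTheory.integral_const_mul]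
    congr 1
    funext z
    ring
  rw [this, hI]
  norm_num
end

section
/- Let φ₂(z; Ω) denote the bivariate normal density with mean 0 and correlation matrix Ω = [[1, ρ], [ρ, 1]] with |ρ| < 1, let Φ be the standard normal CDF, and let α ∈ ℝ. Then ∫_{ℝ²} 2 φ₂(z; Ω) Φ(α(z₁² - z₂²)) dz = 1. -/
/-!
Swapping the coordinates preserves Lebesgue measure and the exchangeable density φ₂ but negates
w(z) = α(z₁² - z₂²). Since Φ(t) + Φ(-t) = 1, the integrand f and its swap add up to 2φ₂, so
2∫f = 2∫φ₂ = 2. The total mass of φ₂ follows from the factorisation of φ₂(x, y) into the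
N(0, 1) density of x times the N(ρx, 1 - ρ²) density of y.
-/

open MeasureTheory Set Real ProbabilityTheory

theorem integral_two_mul_mul_comp_of_antisymm
    {X : Type*} [MeasurableSpace X] {μ : Measure X} {σ : X ≃ᵐ X} {φ w : X → ℝ} {G : ℝ → ℝ}
    (hσ : MeasurePreserving σ μ μ) (hφ : Integrable φ μ) (hφσ : ∀ x, φ (σ x) = φ x)
    (hwσ : ∀ x, w (σ x) = -w x) (hw : Measurable w) (hG : Measurable G)
    (hG_nonneg : ∀ t, 0 ≤ G t) (hG_add_neg : ∀ t, G t + G (-t) = 1) :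
    ∫ x, 2 * φ x * G (w x) ∂μ = ∫ x, φ x ∂μ := by
  set f : X → ℝ := fun x => 2 * φ x * G (w x)
  have hG_le : ∀ t, G t ≤ 1 := fun t => by linarith [hG_add_neg t, hG_nonneg (-t)]
  have hf : Integrable f μ :=
    (hφ.const_mul 2).mul_bdd (hG.comp hw).aestronglyMeasurable <| ae_of_all _ fun x => by
      rw [Real.norm_of_nonneg (hG_nonneg _)]; exact hG_le _
  have hf_add_comp : ∀ x, f x + f (σ x) = 2 * φ x := fun x => by
    simp only [f, hφσ, hwσ]; linear_combination 2 * φ x * hG_add_neg (w x)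
  have h2 : ∫ x, f x ∂μ + ∫ x, f (σ x) ∂μ = 2 * ∫ x, φ x ∂μ := by
    have hfσ : Integrable (fun x => f (σ x)) μ :=
      (hσ.integrable_comp_emb σ.measurableEmbedding).2 hf
    rw [← integral_add hf hfσ]
    simp_rw [hf_add_comp]; exact integral_const_mul 2 _
  rw [hσ.integral_comp' f] at h2
  linarith

theorem integral_Iic_add_integral_Iic_neg_of_even {g : ℝ → ℝ} (hg : Integrable g)
    (hg_even : ∀ t, g (-t) = g t) (x : ℝ) :
    (∫ t in Iic x, g t) + ∫ t in Iic (-x), g t = ∫ t, g t := by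
  have h_neg : ∫ t in Iic (-x), g t = ∫ t in Ioi x, g t := by
    simpa only [hg_even, neg_neg] using integral_comp_neg_Iic (-x) g
  rw [h_neg, intervalIntegral.integral_Iic_add_Ioi hg.integrableOn hg.integrableOn]

theorem monotone_integral_Iic {g : ℝ → ℝ} (hg : Integrable g) (hg_nonneg : 0 ≤ g) :
    Monotone fun x => ∫ t in Iic x, g t := fun _ _ hxy =>
  setIntegral_mono_set hg.integrableOn (ae_of_all _ hg_nonneg)
    (Iic_subset_Iic.2 hxy).eventuallyLE

theorem gaussianPDFReal_zero_neg (v : NNReal) (x : ℝ) :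
    gaussianPDFReal 0 v (-x) = gaussianPDFReal 0 v x := by
  simp [gaussianPDFReal]

/-- The centred bivariate normal density with unit variances and correlation `ρ`. -/
noncomputable def bivariateNormalPDF (ρ : ℝ) (z : ℝ × ℝ) : ℝ :=
  (2 * π * √(1 - ρ ^ 2))⁻¹ *
    exp (-(z.1 ^ 2 - 2 * ρ * z.1 * z.2 + z.2 ^ 2) / (2 * (1 - ρ ^ 2)))

namespace bivariateNormalPDF

theorem comp_swap (ρ : ℝ) (z : ℝ × ℝ) :
    bivariateNormalPDF ρ z.swap = bivariateNormalPDF ρ z := by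
  simp only [bivariateNormalPDF, Prod.fst_swap, Prod.snd_swap]; ring_nf

theorem nonneg (ρ : ℝ) (z : ℝ × ℝ) : 0 ≤ bivariateNormalPDF ρ z := by
  unfold bivariateNormalPDF; positivity

theorem continuous (ρ : ℝ) : Continuous (bivariateNormalPDF ρ) := by
  unfold bivariateNormalPDF; fun_prop

theorem eq_mul_gaussianPDFReal {ρ : ℝ} (hρ : |ρ| < 1) (x y : ℝ) :
    bivariateNormalPDF ρ (x, y) =
      gaussianPDFReal 0 1 x * gaussianPDFReal (ρ * x) (1 - ρ ^ 2).toNNReal y := by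
  have hs : 0 < 1 - ρ ^ 2 := sub_pos.2 ((sq_lt_one_iff_abs_lt_one ρ).2 hρ)
  simp only [bivariateNormalPDF, gaussianPDFReal, Real.coe_toNNReal _ hs.le, NNReal.coe_one,
    mul_one, sub_zero]
  have h_const : (√(2 * π))⁻¹ * (√(2 * π * (1 - ρ ^ 2)))⁻¹ = (2 * π * √(1 - ρ ^ 2))⁻¹ := by
    rw [← mul_inv, Real.sqrt_mul (by positivity) (1 - ρ ^ 2), ← mul_assoc,
      Real.mul_self_sqrt (by positivity)]
  rw [mul_mul_mul_comm, ← Real.exp_add, h_const]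
  congr 2
  field_simp
  ring

theorem integral_mk {ρ : ℝ} (hρ : |ρ| < 1) (x : ℝ) :
    ∫ y, bivariateNormalPDF ρ (x, y) = gaussianPDFReal 0 1 x := by
  have hv : (1 - ρ ^ 2).toNNReal ≠ 0 := by
    simpa using (sq_lt_one_iff_abs_lt_one ρ).2 hρ
  simp_rw [eq_mul_gaussianPDFReal hρ x]
  rw [integral_const_mul, integral_gaussianPDFReal_eq_one _ hv, mul_one]

theorem integrable {ρ : ℝ} (hρ : |ρ| < 1) : Integrable (bivariateNormalPDF ρ) := by
  rw [Measure.volume_eq_prod, integrable_prod_iff (continuous ρ).aestronglyMeasurable]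
  refine ⟨ae_of_all _ fun x => ?_, ?_⟩
  · simp_rw [eq_mul_gaussianPDFReal hρ x]
    exact (integrable_gaussianPDFReal _ _).const_mul _
  · simp_rw [fun z => norm_of_nonneg (nonneg ρ z), integral_mk hρ]
    exact integrable_gaussianPDFReal 0 1

theorem integral_eq_one {ρ : ℝ} (hρ : |ρ| < 1) : ∫ z, bivariateNormalPDF ρ z = 1 := by
  rw [Measure.volume_eq_prod, integral_prod _ (integrable hρ)]
  simp_rw [integral_mk hρ]
  exact integral_gaussianPDFReal_eq_one 0 one_ne_zero

end bivariateNormalPDF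

/-- The function `z ↦ 2 φ₂(z; Ω) Φ(α(z₁² - z₂²))`, with `φ₂(·;Ω)` the bivariate
normal density with correlation `ρ` and `Φ` the standard normal CDF, integrates
to 1 (density (9) of the paper). -/
theorem sn_diff_squares_integral
    (ρ α : ℝ) (hρ : |ρ| < 1)
    (φ₂ : ℝ × ℝ → ℝ)
    (hφ₂ : ∀ z : ℝ × ℝ, φ₂ z =
      (2 * π * Real.sqrt (1 - ρ ^ 2))⁻¹ *
        Real.exp (-(z.1 ^ 2 - 2 * ρ * z.1 * z.2 + z.2 ^ 2) / (2 * (1 - ρ ^ 2))))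
    (Φ : ℝ → ℝ)
    (hΦ : ∀ x, Φ x = ∫ t in Iic x, (Real.sqrt (2 * π))⁻¹ * Real.exp (-t ^ 2 / 2)) :
    ∫ z : ℝ × ℝ, 2 * φ₂ z * Φ (α * (z.1 ^ 2 - z.2 ^ 2)) = 1 := by
  obtain rfl : φ₂ = bivariateNormalPDF ρ := funext hφ₂
  obtain rfl : Φ = fun x => ∫ t in Iic x, gaussianPDFReal 0 1 t := by
    ext x; simp [hΦ, gaussianPDFReal]
  have hg := integrable_gaussianPDFReal 0 1
  rw [← bivariateNormalPDF.integral_eq_one hρ]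
  refine integral_two_mul_mul_comp_of_antisymm (σ := MeasurableEquiv.prodComm)
    Measure.measurePreserving_swap (bivariateNormalPDF.integrable hρ)
    (bivariateNormalPDF.comp_swap ρ) (fun z => by change α * (z.2 ^ 2 - z.1 ^ 2) = _; ring)
    (by fun_prop)
    (monotone_integral_Iic hg (gaussianPDFReal_nonneg 0 1)).measurable
    (fun _ => setIntegral_nonneg measurableSet_Iic fun t _ => gaussianPDFReal_nonneg 0 1 t)
    (fun x => ?_)
  rw [integral_Iic_add_integral_Iic_neg_of_even hg (gaussianPDFReal_zero_neg 1),
    integral_gaussianPDFReal_eq_one 0 one_ne_zero]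
end

section
/- Let Ω = [[1,ρ],[ρ,1]] with |ρ| < 1 and α ∈ ℝ. If (Y₁, Y₂) ~ N₂(0, Ω), then W = α Y₁ (Y₂ - ρ Y₁) has distribution symmetric about 0, and consequently ∫_{ℝ²} 2 φ₂(z; Ω) Φ(α z₁(z₂ - ρ z₁)) dz = 1. -/
open MeasureTheory ProbabilityTheory Set Real

/-!
The linear involution `(z₁, z₂) ↦ (z₁, 2ρz₁ - z₂)` preserves Lebesgue measure and the
quadratic form `z₁² - 2ρz₁z₂ + z₂²`, hence the law of `(Y₁, Y₂)`, and it negates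
`z₁ (z₂ - ρz₁)`; so `W` is symmetric. Since `Φ(w) + Φ(-w) = 1`, the integral equals
`2 E[Φ(W)] = E[Φ(W) + Φ(-W)] = 1`.
-/

lemma MeasureTheory.MeasurePreserving.map_withDensity_of_comp_eq {α : Type*}
    [MeasurableSpace α] {μ : Measure α} {e : α → α} (he : MeasurePreserving e μ μ)
    {f : α → ENNReal} (hf : Measurable f) (hfe : ∀ x, f (e x) = f x) :
    (μ.withDensity f).map e = μ.withDensity f := by
  ext s hs
  rw [Measure.map_apply he.measurable hs, withDensity_apply _ (he.measurable hs),
    withDensity_apply _ hs]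
  calc ∫⁻ x in e ⁻¹' s, f x ∂μ = ∫⁻ x in e ⁻¹' s, f (e x) ∂μ := by
        simp only [hfe]
    _ = ∫⁻ x in s, f x ∂μ := by rw [← setLIntegral_map hs hf he.measurable, he.map_eq]

lemma map_neg_eq_of_map_eq {α : Type*} [MeasurableSpace α] {μ : Measure α} {T : α → α}
    {g : α → ℝ} (hT : Measurable T) (hg : Measurable g) (hμ : μ.map T = μ)
    (hgT : ∀ x, g (T x) = -g x) : (μ.map g).map (fun x => -x) = μ.map g := by
  have : (fun x => -x) ∘ g = g ∘ T := funext fun x => (hgT x).symm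
  rw [Measure.map_map measurable_neg hg, this, ← Measure.map_map hg hT, hμ]

lemma integral_withDensity_ofReal {α : Type*} [MeasurableSpace α] {μ : Measure α}
    {f : α → ℝ} (hf : Measurable f) (hf_nonneg : ∀ x, 0 ≤ f x) (h : α → ℝ) :
    ∫ x, h x ∂μ.withDensity (fun x => ENNReal.ofReal (f x)) = ∫ x, f x * h x ∂μ := by
  rw [integral_withDensity_eq_integral_toReal_smul hf.ennreal_ofReal
    (ae_of_all _ fun _ => ENNReal.ofReal_lt_top)]
  simp only [ENNReal.toReal_ofReal (hf_nonneg _), smul_eq_mul]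

def shearReflection (c : ℝ) (z : ℝ × ℝ) : ℝ × ℝ := (z.1, c * z.1 - z.2)

lemma measurePreserving_shearReflection (c : ℝ) :
    MeasurePreserving (shearReflection c) volume volume :=
  (MeasurePreserving.id volume).skew_product (g := fun a b => c * a - b) (by fun_prop)
    (Filter.Eventually.of_forall fun a =>
      (Measure.measurePreserving_sub_left volume (c * a)).map_eq)

lemma cdf_add_cdf_neg_of_map_neg_eq {γ : Measure ℝ} [IsProbabilityMeasure γ]
    [NullSingletonClass γ] (hγ : γ.map (fun x => -x) = γ) (x : ℝ) :
    cdf γ x + cdf γ (-x) = 1 := by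
  have hneg : cdf γ (-x) = γ.real (Iic x)ᶜ := by
    calc cdf γ (-x) = (γ.map (fun x => -x)).real (Iic (-x)) := by rw [hγ, cdf_eq_real]
      _ = γ.real (Ici x) := by
        rw [map_measureReal_apply measurable_neg measurableSet_Iic, neg_preimage, neg_Iic,
          neg_neg]
      _ = γ.real (Iic x)ᶜ := by rw [compl_Iic, measureReal_congr Ioi_ae_eq_Ici]
  rw [hneg, cdf_eq_real, measureReal_add_measureReal_compl measurableSet_Iic, probReal_univ]

lemma integral_eq_half_of_map_neg_eq {ν : Measure ℝ} [IsProbabilityMeasure ν]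
    (hν : ν.map (fun x => -x) = ν) {F : ℝ → ℝ} (hF : Integrable F ν)
    (hsum : ∀ x, F x + F (-x) = 1) : ∫ x, F x ∂ν = 1 / 2 := by
  have hF_neg : Integrable (fun x => F (-x)) ν :=
    (hν.symm ▸ hF).comp_measurable measurable_neg
  have hreflect : ∫ x, F (-x) ∂ν = ∫ x, F x ∂ν := by
    conv_rhs => rw [← hν]
    exact (integral_map measurable_neg.aemeasurable (hν.symm ▸ hF.1)).symm
  have htotal : ∫ x, F x ∂ν + ∫ x, F (-x) ∂ν = 1 := by
    simp_rw [← integral_add hF hF_neg, hsum, integral_const, probReal_univ, smul_eq_mul,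
      mul_one]
  linarith

lemma integral_cdf_eq_half {γ ν : Measure ℝ} [IsProbabilityMeasure γ] [NullSingletonClass γ]
    [IsProbabilityMeasure ν] (hγ : γ.map (fun x => -x) = γ) (hν : ν.map (fun x => -x) = ν) :
    ∫ x, cdf γ x ∂ν = 1 / 2 := by
  refine integral_eq_half_of_map_neg_eq hν ?_ (cdf_add_cdf_neg_of_map_neg_eq hγ)
  refine Integrable.of_bound (cdf γ).mono.measurable.aestronglyMeasurable 1
    (ae_of_all _ fun x => ?_)
  rw [Real.norm_of_nonneg (cdf_nonneg γ x)]
  exact cdf_le_one γ x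

lemma gaussianReal_zero_map_neg (v : NNReal) :
    (gaussianReal 0 v).map (fun x => -x) = gaussianReal 0 v := by
  simpa using gaussianReal_map_neg (μ := 0) (v := v)

lemma cdf_gaussianReal_zero_one (x : ℝ) :
    cdf (gaussianReal 0 1) x = ∫ t in Iic x, (√(2 * π))⁻¹ * exp (-t ^ 2 / 2) := by
  have hnonneg : 0 ≤ ∫ t in Iic x, gaussianPDFReal 0 1 t :=
    setIntegral_nonneg measurableSet_Iic fun t _ => gaussianPDFReal_nonneg 0 1 t
  rw [cdf_eq_real, measureReal_def, gaussianReal_apply_eq_integral 0 one_ne_zero,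
    ENNReal.toReal_ofReal hnonneg]
  simp [gaussianPDFReal]

theorem sn_product_rho_general
    {Ω : Type*} [MeasurableSpace Ω] (P : Measure Ω) [IsProbabilityMeasure P]
    (ρ α : ℝ)
    (φ₂ : ℝ × ℝ → ℝ)
    (hφ₂ : ∀ z : ℝ × ℝ, φ₂ z =
      (2 * π * Real.sqrt (1 - ρ ^ 2))⁻¹ *
        Real.exp (-(z.1 ^ 2 - 2 * ρ * z.1 * z.2 + z.2 ^ 2) / (2 * (1 - ρ ^ 2))))
    (Φ : ℝ → ℝ)
    (hΦ : ∀ x, Φ x = ∫ t in Iic x, (Real.sqrt (2 * π))⁻¹ * Real.exp (-t ^ 2 / 2))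
    (Y₁ Y₂ : Ω → ℝ) (hY₁ : Measurable Y₁) (hY₂ : Measurable Y₂)
    (hlaw : Measure.map (fun ω => (Y₁ ω, Y₂ ω)) P =
      volume.withDensity (fun z : ℝ × ℝ => ENNReal.ofReal (φ₂ z))) :
    (Measure.map (fun ω => -(α * Y₁ ω * (Y₂ ω - ρ * Y₁ ω))) P =
        Measure.map (fun ω => α * Y₁ ω * (Y₂ ω - ρ * Y₁ ω)) P) ∧
      ∫ z : ℝ × ℝ, 2 * φ₂ z * Φ (α * z.1 * (z.2 - ρ * z.1)) = 1 := by
  set W : ℝ × ℝ → ℝ := fun z => α * z.1 * (z.2 - ρ * z.1)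
  have hW : Measurable W := by fun_prop
  have hY : Measurable fun ω => (Y₁ ω, Y₂ ω) := hY₁.prodMk hY₂
  have hφ₂m : Measurable φ₂ := by rw [funext hφ₂]; fun_prop
  have hφ₂_nonneg : ∀ z, 0 ≤ φ₂ z := fun z => by rw [hφ₂]; positivity
  have hlaw_inv : (P.map fun ω => (Y₁ ω, Y₂ ω)).map (shearReflection (2 * ρ)) =
      P.map fun ω => (Y₁ ω, Y₂ ω) := by
    rw [hlaw]
    exact (measurePreserving_shearReflection _).map_withDensity_of_comp_eq
      hφ₂m.ennreal_ofReal fun z => by simp only [hφ₂, shearReflection]; ring_nf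
  have hsymm := map_neg_eq_of_map_eq (measurePreserving_shearReflection _).measurable hW
    hlaw_inv fun z => by simp only [W, shearReflection]; ring
  rw [Measure.map_map hW hY] at hsymm
  refine ⟨by rwa [Measure.map_map measurable_neg (hW.comp hY)] at hsymm, ?_⟩
  have : IsProbabilityMeasure (P.map (W ∘ fun ω => (Y₁ ω, Y₂ ω))) :=
    Measure.isProbabilityMeasure_map (hW.comp hY).aemeasurable
  have := nullSingletonClass_gaussianReal (μ := 0) (one_ne_zero (α := NNReal))
  have hΦ_cdf : Φ = cdf (gaussianReal 0 1) :=
    funext fun x => by rw [hΦ, cdf_gaussianReal_zero_one]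
  calc ∫ z, 2 * φ₂ z * Φ (W z) = 2 * ∫ z, φ₂ z * Φ (W z) := by
        rw [← integral_const_mul]; simp only [mul_assoc]
    _ = 2 * ∫ x, cdf (gaussianReal 0 1) x ∂(P.map (W ∘ fun ω => (Y₁ ω, Y₂ ω))) := by
        rw [← integral_withDensity_ofReal hφ₂m hφ₂_nonneg, ← hlaw,
          ← Measure.map_map hW hY,
          integral_map hW.aemeasurable (cdf _).mono.measurable.aestronglyMeasurable, hΦ_cdf]
    _ = 1 := by rw [integral_cdf_eq_half (gaussianReal_zero_map_neg 1) hsymm]; norm_num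

/-- If `(Y₁, Y₂) ~ N₂(0, Ω)` with correlation `ρ`, then `W = α Y₁ (Y₂ - ρ Y₁)` is
symmetric about 0, and consequently `∫ 2 φ₂(z; Ω) Φ(α z₁ (z₂ - ρ z₁)) dz = 1`
(first density in equation (14)). -/
theorem sn_product_rho
    {Ω : Type*} [MeasurableSpace Ω] (P : Measure Ω) [IsProbabilityMeasure P]
    (ρ α : ℝ) (hρ : |ρ| < 1)
    (φ₂ : ℝ × ℝ → ℝ)
    (hφ₂ : ∀ z : ℝ × ℝ, φ₂ z =
      (2 * π * Real.sqrt (1 - ρ ^ 2))⁻¹ *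
        Real.exp (-(z.1 ^ 2 - 2 * ρ * z.1 * z.2 + z.2 ^ 2) / (2 * (1 - ρ ^ 2))))
    (Φ : ℝ → ℝ)
    (hΦ : ∀ x, Φ x = ∫ t in Iic x, (Real.sqrt (2 * π))⁻¹ * Real.exp (-t ^ 2 / 2))
    (Y₁ Y₂ : Ω → ℝ) (hY₁ : Measurable Y₁) (hY₂ : Measurable Y₂)
    (hlaw : Measure.map (fun ω => (Y₁ ω, Y₂ ω)) P =
      volume.withDensity (fun z : ℝ × ℝ => ENNReal.ofReal (φ₂ z))) :
    (Measure.map (fun ω => -(α * Y₁ ω * (Y₂ ω - ρ * Y₁ ω))) P =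
        Measure.map (fun ω => α * Y₁ ω * (Y₂ ω - ρ * Y₁ ω)) P) ∧
      ∫ z : ℝ × ℝ, 2 * φ₂ z * Φ (α * z.1 * (z.2 - ρ * z.1)) = 1 :=
  sn_product_rho_general P ρ α φ₂ hφ₂ Φ hΦ Y₁ Y₂ hY₁ hY₂ hlaw
end

section
/- Let Y₁, Y₂ be independent Exponential(1) random variables, X an independent random variable with standard Laplace density g(x) = e^{-|x|}/2, and α > 0. Let T = X/α + Y₂ and F_T its CDF. Let Z = (Z₁, Z₂) be distributed as (Y₁, Y₂) conditional on the event {X < α(Y₁ - Y₂)}. Then Z₁ has density 2 e^{-z} F_T(z) and Z₂ has density 2 e^{-z} (1 - F_T(z)) on (0, ∞). -/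
/-!
Write `A = {X < α(Y₁ - Y₂)} = {T < Y₁}`. Integrating out `(X, Y₂)` with `Y₁ = z` fixed, the
restriction of the law of `Y₁` to `A` has density `e^{-z} P(T < z) = e^{-z} F_T(z)`, since `T`
has no atoms. Integrating out `(X, Y₁)` with `Y₂ = z` fixed gives the density
`e^{-z} P(X < α(Y₁ - z))`, and the symmetry `X ↦ -X` of the Laplace law turns this into
`e^{-z} (1 - F_T(z))`. The two restricted laws both have total mass `P(A)` and add up to the
exponential law, so `P(A) = 1/2` and conditioning on `A` doubles both densities.
-/

open MeasureTheory ProbabilityTheory Set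
open scoped ENNReal

theorem MeasureTheory.Measure.isNegInvariant_withDensity {G : Type*} [MeasurableSpace G]
    [InvolutiveNeg G] [MeasurableNeg G] (μ : Measure G) [μ.IsNegInvariant] {f : G → ℝ≥0∞} (hf : Measurable f)
    (hf_even : ∀ x, f (-x) = f x) : (μ.withDensity f).IsNegInvariant := by
  refine ⟨Measure.ext fun s hs => ?_⟩
  rw [Measure.neg_def, Measure.map_apply measurable_neg hs, withDensity_apply _ (measurable_neg hs),
    withDensity_apply _ hs, ← (Measure.measurePreserving_neg μ).setLIntegral_comp_preimage hs hf]
  simp_rw [hf_even]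

theorem withDensity_add_withDensity_one_sub {α : Type*} [MeasurableSpace α] (κ : Measure α)
    {G : α → ℝ≥0∞} (hG : Measurable G) (hG_le : G ≤ 1) :
    κ.withDensity G + κ.withDensity (1 - G) = κ := by
  rw [← withDensity_add_left hG, add_tsub_cancel_of_le hG_le, withDensity_one]

section HalfPlanes

variable {β : Type*} [MeasurableSpace β] {μ : Measure ℝ} {ν : Measure β} {g : β → ℝ}

theorem measure_prod_lt_eq_measure_prod_le [SFinite μ] [SFinite ν] [NullSingletonClass μ]
    (hg : Measurable g) :
    (μ.prod ν) {w | w.1 < g w.2} = (μ.prod ν) {w | w.1 ≤ g w.2} := by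
  rw [Measure.prod_apply_symm (measurableSet_lt (by fun_prop) (by fun_prop)),
    Measure.prod_apply_symm (measurableSet_le (by fun_prop) (by fun_prop))]
  exact lintegral_congr fun y => measure_congr (Iio_ae_eq_Iic (a := g y))

theorem measure_prod_lt_neg_eq_one_sub [μ.IsNegInvariant] [IsProbabilityMeasure μ]
    [IsProbabilityMeasure ν] (hg : Measurable g) :
    (μ.prod ν) {w | w.1 < -g w.2} = 1 - (μ.prod ν) {w | w.1 ≤ g w.2} := by
  have hsymm : MeasurePreserving (Prod.map Neg.neg id) (μ.prod ν) (μ.prod ν) :=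
    (Measure.measurePreserving_neg μ).prod (MeasurePreserving.id ν)
  have hpre : Prod.map Neg.neg id ⁻¹' {w : ℝ × β | w.1 < -g w.2} = {w | w.1 ≤ g w.2}ᶜ := by
    ext w
    simp
  rw [← hsymm.measure_preimage (measurableSet_lt (by fun_prop) (by fun_prop)).nullMeasurableSet,
    hpre, prob_compl_eq_one_sub (measurableSet_le (by fun_prop) (by fun_prop))]

end HalfPlanes

section Laws

variable {Ω β γ δ : Type*} [MeasurableSpace Ω] [MeasurableSpace β] [MeasurableSpace γ]
  [MeasurableSpace δ] {P : Measure Ω}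

theorem map_prodMk_prodMk_eq_prod [IsProbabilityMeasure P] {X : Ω → β} {Y : Ω → γ} {Z : Ω → δ}
    (hX : Measurable X) (hY : Measurable Y) (hZ : Measurable Z) (hYZ : IndepFun Y Z P)
    (hXYZ : IndepFun X (fun ω => (Y ω, Z ω)) P) :
    P.map (fun ω => (Y ω, (X ω, Z ω))) = (P.map Y).prod ((P.map X).prod (P.map Z)) := by
  have : IsProbabilityMeasure (P.map X) := Measure.isProbabilityMeasure_map hX.aemeasurable
  have : IsProbabilityMeasure (P.map Y) := Measure.isProbabilityMeasure_map hY.aemeasurable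
  have : IsProbabilityMeasure (P.map Z) := Measure.isProbabilityMeasure_map hZ.aemeasurable
  have hjoint : P.map (fun ω => (X ω, (Y ω, Z ω))) =
      (P.map X).prod ((P.map Y).prod (P.map Z)) := by
    rw [(indepFun_iff_map_prod_eq_prod_map_map hX.aemeasurable
      (hY.prodMk hZ).aemeasurable).mp hXYZ,
      (indepFun_iff_map_prod_eq_prod_map_map hY.aemeasurable hZ.aemeasurable).mp hYZ]
  have hrotate : MeasurePreserving (fun p : β × γ × δ => (p.2.1, (p.1, p.2.2)))
      ((P.map X).prod ((P.map Y).prod (P.map Z))) ((P.map Y).prod ((P.map X).prod (P.map Z))) :=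
    (measurePreserving_prodAssoc _ _ _).comp
      ((Measure.measurePreserving_swap.prod (MeasurePreserving.id _)).comp
        (measurePreserving_prodAssoc _ _ _).symm)
  rw [← hrotate.map_eq, ← hjoint, Measure.map_map hrotate.measurable (hX.prodMk (hY.prodMk hZ))]
  rfl

theorem map_restrict_preimage_prodMk_eq_withDensity {Y : Ω → β} {W : Ω → γ} (hY : Measurable Y)
    (hW : Measurable W) {κ : Measure β} {ρ : Measure γ} [SFinite κ] [SFinite ρ]
    (hlaw : P.map (fun ω => (Y ω, W ω)) = κ.prod ρ) {C : Set (β × γ)} (hC : MeasurableSet C) :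
    (P.restrict ((fun ω => (Y ω, W ω)) ⁻¹' C)).map Y =
      κ.withDensity fun z => ρ (Prod.mk z ⁻¹' C) := by
  ext s hs
  rw [Measure.map_apply hY hs, Measure.restrict_apply (hY hs), withDensity_apply _ hs,
    ← Measure.prod_apply hC, ← Measure.restrict_univ (μ := ρ), Measure.prod_restrict,
    Measure.restrict_apply hC, ← hlaw,
    Measure.map_apply (hY.prodMk hW) (hC.inter (hs.prod MeasurableSet.univ)), preimage_inter,
    inter_comm, prod_univ]
  rfl

end Laws

/-- The distribution function of `X / α + Y` for independent `X ∼ μ`, `Y ∼ κ`, when `α > 0`. -/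
noncomputable def cdfDivAdd (μ κ : Measure ℝ) (α z : ℝ) : ℝ≥0∞ :=
  (μ.prod κ) {w | w.1 ≤ α * (z - w.2)}

section ConditionedMarginals

variable {Ω : Type*} [MeasurableSpace Ω] {P : Measure Ω} {μ κ : Measure ℝ} {α : ℝ}
  {X Y₁ Y₂ : Ω → ℝ}

theorem measure_div_add_le_eq_cdfDivAdd (hα : 0 < α) (hX : Measurable X) (hY₂ : Measurable Y₂)
    (hlaw : P.map (fun ω => (X ω, Y₂ ω)) = μ.prod κ) (z : ℝ) :
    P {ω | X ω / α + Y₂ ω ≤ z} = cdfDivAdd μ κ α z := by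
  rw [cdfDivAdd, ← hlaw,
    Measure.map_apply (hX.prodMk hY₂) (measurableSet_le (by fun_prop) (by fun_prop))]
  congr 1
  ext ω
  simp only [mem_ofPred_eq, mem_preimage]
  rw [← le_sub_iff_add_le, div_le_iff₀ hα, mul_comm]

variable [IsProbabilityMeasure μ] [IsProbabilityMeasure κ]

theorem measurable_cdfDivAdd : Measurable (cdfDivAdd μ κ α) :=
  measurable_measure_prodMk_left (ν := μ.prod κ)
    (measurableSet_le (by fun_prop) (by fun_prop) :
      MeasurableSet {q : ℝ × ℝ × ℝ | q.2.1 ≤ α * (q.1 - q.2.2)})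

theorem map_fst_restrict_lt_eq_withDensity [NullSingletonClass μ] (hX : Measurable X)
    (hY₁ : Measurable Y₁) (hY₂ : Measurable Y₂)
    (hlaw : P.map (fun ω => (Y₁ ω, (X ω, Y₂ ω))) = κ.prod (μ.prod κ)) :
    (P.restrict {ω | X ω < α * (Y₁ ω - Y₂ ω)}).map Y₁ = κ.withDensity (cdfDivAdd μ κ α) := by
  refine (map_restrict_preimage_prodMk_eq_withDensity hY₁ (hX.prodMk hY₂) hlaw
    (C := {q | q.2.1 < α * (q.1 - q.2.2)}) (measurableSet_lt (by fun_prop) (by fun_prop))).trans ?_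
  congr 1
  funext z
  exact measure_prod_lt_eq_measure_prod_le (g := fun y => α * (z - y)) (by fun_prop)

theorem map_snd_restrict_lt_eq_withDensity [μ.IsNegInvariant] (hX : Measurable X)
    (hY₁ : Measurable Y₁) (hY₂ : Measurable Y₂)
    (hlaw : P.map (fun ω => (Y₂ ω, (X ω, Y₁ ω))) = κ.prod (μ.prod κ)) :
    (P.restrict {ω | X ω < α * (Y₁ ω - Y₂ ω)}).map Y₂ = κ.withDensity (1 - cdfDivAdd μ κ α) := by
  refine (map_restrict_preimage_prodMk_eq_withDensity hY₂ (hX.prodMk hY₁) hlaw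
    (C := {q | q.2.1 < α * (q.2.2 - q.1)}) (measurableSet_lt (by fun_prop) (by fun_prop))).trans ?_
  congr 1
  funext z
  rw [Pi.sub_apply, Pi.one_apply, cdfDivAdd,
    ← measure_prod_lt_neg_eq_one_sub (g := fun y => α * (z - y)) (by fun_prop)]
  simp only [← mul_neg, neg_sub]
  rfl

theorem measure_lt_mul_sub_eq_half [NullSingletonClass μ] [μ.IsNegInvariant] (hX : Measurable X)
    (hY₁ : Measurable Y₁) (hY₂ : Measurable Y₂)
    (hlaw₁ : P.map (fun ω => (Y₁ ω, (X ω, Y₂ ω))) = κ.prod (μ.prod κ))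
    (hlaw₂ : P.map (fun ω => (Y₂ ω, (X ω, Y₁ ω))) = κ.prod (μ.prod κ)) :
    P {ω | X ω < α * (Y₁ ω - Y₂ ω)} = 2⁻¹ := by
  have h := congrArg (· univ) (withDensity_add_withDensity_one_sub κ
    (measurable_cdfDivAdd (μ := μ) (κ := κ) (α := α)) fun _ => prob_le_one)
  simp only [Measure.coe_add, Pi.add_apply, measure_univ] at h
  rw [← map_fst_restrict_lt_eq_withDensity hX hY₁ hY₂ hlaw₁,
    ← map_snd_restrict_lt_eq_withDensity hX hY₁ hY₂ hlaw₂,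
    Measure.map_apply hY₁ .univ, Measure.map_apply hY₂ .univ] at h
  simp only [preimage_univ, Measure.restrict_apply_univ, ← two_mul] at h
  exact ENNReal.eq_inv_of_mul_eq_one_left (by rwa [mul_comm])

end ConditionedMarginals

theorem smul_withDensity_expDensity {F : ℝ → ℝ} (hF : Measurable F) :
    (2 : ℝ≥0∞) • (volume.withDensity
        fun x => ENNReal.ofReal (if 0 < x then Real.exp (-x) else 0)).withDensity
          (fun z => ENNReal.ofReal (F z)) =
      volume.withDensity fun z => ENNReal.ofReal (if 0 < z then 2 * Real.exp (-z) * F z else 0) := by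
  have hexp : Measurable fun x : ℝ => ENNReal.ofReal (if 0 < x then Real.exp (-x) else 0) :=
    (Measurable.ite measurableSet_Ioi (by fun_prop) measurable_const).ennreal_ofReal
  rw [← withDensity_mul _ hexp hF.ennreal_ofReal,
    ← withDensity_smul _ (hexp.mul hF.ennreal_ofReal)]
  congr 1
  funext z
  by_cases hz : 0 < z
  · simp only [Pi.smul_apply, Pi.mul_apply, smul_eq_mul, if_pos hz]
    rw [← ENNReal.ofReal_ofNat 2, ← ENNReal.ofReal_mul (Real.exp_pos _).le,
      ← ENNReal.ofReal_mul zero_le_two, mul_assoc]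
  · simp [hz]

/-- Equation (17) with ω = 1: if `Y₁, Y₂` are independent Exponential(1), `X` is an
independent standard Laplace variable, `α > 0`, `T = X/α + Y₂` with CDF `F_T`, and
`Z = (Y₁, Y₂)` conditioned on `{X < α(Y₁ - Y₂)}`, then `Z₁` has density
`2 e^{-z} F_T(z)` and `Z₂` has density `2 e^{-z} (1 - F_T(z))` on `(0, ∞)`. -/
theorem exponential_laplace_marginals
    {Ω : Type*} [MeasurableSpace Ω] (P : Measure Ω) [IsProbabilityMeasure P]
    (α : ℝ) (hα : 0 < α)
    (X Y₁ Y₂ : Ω → ℝ)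
    (hX : Measurable X) (hY₁ : Measurable Y₁) (hY₂ : Measurable Y₂)
    (hYlaw₁ : Measure.map Y₁ P = volume.withDensity
      (fun x => ENNReal.ofReal (if 0 < x then Real.exp (-x) else 0)))
    (hYlaw₂ : Measure.map Y₂ P = volume.withDensity
      (fun x => ENNReal.ofReal (if 0 < x then Real.exp (-x) else 0)))
    (hXlaw : Measure.map X P = volume.withDensity
      (fun x => ENNReal.ofReal (Real.exp (-|x|) / 2)))
    (hindepY : IndepFun Y₁ Y₂ P)
    (hindepX : IndepFun X (fun ω => (Y₁ ω, Y₂ ω)) P)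
    (FT : ℝ → ℝ)
    (hFT : ∀ t, FT t = (P {ω | X ω / α + Y₂ ω ≤ t}).toReal) :
    Measure.map Y₁ (ProbabilityTheory.cond P {ω | X ω < α * (Y₁ ω - Y₂ ω)}) =
        volume.withDensity
          (fun z => ENNReal.ofReal (if 0 < z then 2 * Real.exp (-z) * FT z else 0)) ∧
      Measure.map Y₂ (ProbabilityTheory.cond P {ω | X ω < α * (Y₁ ω - Y₂ ω)}) =
        volume.withDensity
          (fun z => ENNReal.ofReal (if 0 < z then 2 * Real.exp (-z) * (1 - FT z) else 0)) := by
  set κ := volume.withDensity fun x : ℝ => ENNReal.ofReal (if 0 < x then Real.exp (-x) else 0)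
  set μ := volume.withDensity fun x : ℝ => ENNReal.ofReal (Real.exp (-|x|) / 2)
  have : IsProbabilityMeasure κ := hYlaw₁ ▸ Measure.isProbabilityMeasure_map hY₁.aemeasurable
  have : IsProbabilityMeasure μ := hXlaw ▸ Measure.isProbabilityMeasure_map hX.aemeasurable
  have : μ.IsNegInvariant :=
    Measure.isNegInvariant_withDensity volume (by fun_prop) fun x => by rw [abs_neg]
  have hlaw₁ : P.map (fun ω => (Y₁ ω, (X ω, Y₂ ω))) = κ.prod (μ.prod κ) := by
    rw [map_prodMk_prodMk_eq_prod hX hY₁ hY₂ hindepY hindepX, hXlaw, hYlaw₁, hYlaw₂]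
  have hlaw₂ : P.map (fun ω => (Y₂ ω, (X ω, Y₁ ω))) = κ.prod (μ.prod κ) := by
    rw [map_prodMk_prodMk_eq_prod hX hY₂ hY₁ hindepY.symm
      (hindepX.comp measurable_id measurable_swap), hXlaw, hYlaw₁, hYlaw₂]
  have hFT_eq : FT = fun z => (cdfDivAdd μ κ α z).toReal := by
    have hlaw : P.map (fun ω => (X ω, Y₂ ω)) = μ.prod κ := by
      rw [← hXlaw, ← hYlaw₂]
      exact (indepFun_iff_map_prod_eq_prod_map_map hX.aemeasurable hY₂.aemeasurable).mp
        (hindepX.comp measurable_id measurable_snd)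
    funext z
    rw [hFT, measure_div_add_le_eq_cdfDivAdd hα hX hY₂ hlaw]
  subst hFT_eq
  rw [ProbabilityTheory.cond, measure_lt_mul_sub_eq_half hX hY₁ hY₂ hlaw₁ hlaw₂, inv_inv,
    Measure.map_smul, Measure.map_smul]
  refine ⟨?_, ?_⟩
  · rw [map_fst_restrict_lt_eq_withDensity hX hY₁ hY₂ hlaw₁,
      ← smul_withDensity_expDensity measurable_cdfDivAdd.ennreal_toReal]
    congr 2
    funext z
    exact (ENNReal.ofReal_toReal (measure_ne_top _ _)).symm
  · rw [map_snd_restrict_lt_eq_withDensity hX hY₁ hY₂ hlaw₂,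
      ← smul_withDensity_expDensity (F := fun z => 1 - (cdfDivAdd μ κ α z).toReal)
        (measurable_const.sub measurable_cdfDivAdd.ennreal_toReal)]
    congr 2
    funext z
    rw [Pi.sub_apply, ENNReal.ofReal_sub _ ENNReal.toReal_nonneg, ENNReal.ofReal_one,
      ENNReal.ofReal_toReal (a := cdfDivAdd μ κ α z) (measure_ne_top _ _)]
    rfl
end
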